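/- arXiv:2504.19668 — 4 statements merged into one kernel-verified Lean document; each statement's English description precedes it below -/
import Mathlib

section
/- For every h ∈ V^w(ℝ₊), every ρ > 0, and every λ > 0, the weighted logarithmic modulus of continuity satisfies Υ(h, λρ) ≤ 2(1 + λ)³ (1 + ρ²) Υ(h, ρ). -/
open Real

/-- Weighted logarithmic modulus of continuity. -/
noncomputable def Upsilon (h : ℝ → ℝ) (ρ : ℝ) : ℝ :=
  sSup {y : ℝ | ∃ u z : ℝ, 0 < u ∧ 0 < z ∧ |Real.log u| ≤ ρ ∧
    y = |h (u * z) - h z| / ((1 + (Real.log z) ^ 2) * (1 + (Real.log u) ^ 2))}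

/-- Log-uniform continuity on the positive reals. -/
def LogUC (g : ℝ → ℝ) : Prop :=
  ∀ ε : ℝ, 0 < ε → ∃ δ : ℝ, 0 < δ ∧ ∀ z₁ : ℝ, 0 < z₁ → ∀ z₂ : ℝ, 0 < z₂ →
    |Real.log z₁ - Real.log z₂| ≤ δ → |g z₁ - g z₂| < ε

/-- Membership in the weighted space `V^w(ℝ₊)` with `w z = 1/(1+(log z)^2)`:
`w·h` is log-uniformly continuous and bounded. -/
def MemVw (h : ℝ → ℝ) : Prop :=
  LogUC (fun z => h z / (1 + (Real.log z) ^ 2)) ∧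
    ∃ K : ℝ, ∀ z : ℝ, 0 < z → |h z| / (1 + (Real.log z) ^ 2) ≤ K

lemma zero_mem_upsSet (h : ℝ → ℝ) (ρ : ℝ) (hρ : 0 ≤ ρ) :
    (0:ℝ) ∈ {y : ℝ | ∃ u z : ℝ, 0 < u ∧ 0 < z ∧ |Real.log u| ≤ ρ ∧
      y = |h (u * z) - h z| / ((1 + (Real.log z) ^ 2) * (1 + (Real.log u) ^ 2))} :=
  ⟨1, 1, one_pos, one_pos, by simp [hρ], by simp⟩

lemma bddAbove_upsSet (h : ℝ → ℝ) (K : ℝ)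
    (hK : ∀ z : ℝ, 0 < z → |h z| / (1 + (Real.log z) ^ 2) ≤ K) (ρ : ℝ) :
    BddAbove {y : ℝ | ∃ u z : ℝ, 0 < u ∧ 0 < z ∧ |Real.log u| ≤ ρ ∧
      y = |h (u * z) - h z| / ((1 + (Real.log z) ^ 2) * (1 + (Real.log u) ^ 2))} := by
  have hK0 : 0 ≤ K :=
    le_trans (div_nonneg (abs_nonneg _) (by positivity)) (hK 1 one_pos)
  refine ⟨3 * K, ?_⟩
  rintro y ⟨u, z, hu, hz, -, rfl⟩
  set a := Real.log z with ha
  set b := Real.log u with hb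
  have hD : (0:ℝ) < (1 + a ^ 2) * (1 + b ^ 2) := by positivity
  rw [div_le_iff₀ hD]
  have h1 : |h (u * z)| ≤ K * (1 + (b + a) ^ 2) := by
    have := hK (u * z) (mul_pos hu hz)
    rw [div_le_iff₀ (by positivity), Real.log_mul hu.ne' hz.ne'] at this
    exact this
  have h2 : |h z| ≤ K * (1 + a ^ 2) := by
    have := hK z hz
    rw [div_le_iff₀ (by positivity)] at this
    exact this
  have h3 : |h (u * z) - h z| ≤ |h (u * z)| + |h z| := abs_sub _ _
  nlinarith [mul_nonneg hK0 (sq_nonneg (a - b)), mul_nonneg hK0 (sq_nonneg (a * b)),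
    mul_nonneg hK0 (sq_nonneg b)]

lemma one_add_sq_add_le (a b : ℝ) : 1 + (a + b) ^ 2 ≤ 2 * (1 + a ^ 2) * (1 + b ^ 2) := by
  nlinarith [sq_nonneg (a - b), sq_nonneg (a * b)]

set_option maxHeartbeats 1000000 in
lemma key (h : ℝ → ℝ) (K : ℝ)
    (hK : ∀ z : ℝ, 0 < z → |h z| / (1 + (Real.log z) ^ 2) ≤ K)
    (ρ : ℝ) (hρ : 0 < ρ) (lam : ℝ) (hlam : 0 < lam)
    (u z : ℝ) (hu : 0 < u) (hz : 0 < z) (hub : |Real.log u| ≤ lam * ρ) :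
    |h (u * z) - h z| ≤ 2 * (1 + lam) ^ 3 * (1 + ρ ^ 2) * Upsilon h ρ *
      ((1 + (Real.log z) ^ 2) * (1 + (Real.log u) ^ 2)) := by
  have hbdd := bddAbove_upsSet h K hK ρ
  have hU0 : 0 ≤ Upsilon h ρ := by
    rw [Upsilon]; exact le_csSup hbdd (zero_mem_upsSet h ρ hρ.le)
  set t := Real.log u with ht
  set a := Real.log z with ha
  set n := ⌈lam⌉₊ with hn
  have hn0 : 0 < n := Nat.ceil_pos.mpr hlam
  have hnR : (0:ℝ) < n := by exact_mod_cast hn0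
  have hlamn : lam ≤ (n:ℝ) := Nat.le_ceil lam
  have htn : |t / n| ≤ ρ := by
    rw [abs_div, abs_of_pos hnR, div_le_iff₀ hnR]
    calc |t| ≤ lam * ρ := hub
    _ ≤ ρ * n := by nlinarith
  -- telescoping function
  set f : ℕ → ℝ := fun k => h (Real.exp (k * t / n) * z) with hf
  have hfn : f n = h (u * z) := by
    simp only [hf]
    have hnn : (n:ℝ) * t / n = t := by field_simp
    rw [hnn, ht, Real.exp_log hu]
  have hf0 : f 0 = h z := by simp [hf]
  -- per-step bound
  have step : ∀ k ∈ Finset.range n, |f (k + 1) - f k| ≤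
      Upsilon h ρ * (2 * (1 + a ^ 2) * (1 + t ^ 2) * (1 + ρ ^ 2)) := by
    intro k hk
    rw [Finset.mem_range] at hk
    set v : ℝ := Real.exp (t / n) with hv
    set zk : ℝ := Real.exp (k * t / n) * z with hzk
    have hv0 : 0 < v := Real.exp_pos _
    have hzk0 : 0 < zk := mul_pos (Real.exp_pos _) hz
    have hlogv : Real.log v = t / n := Real.log_exp _
    have hlogzk : Real.log zk = k * t / n + a := by
      rw [hzk, Real.log_mul (Real.exp_pos _).ne' hz.ne', Real.log_exp, ha]
    have hvzk : v * zk = Real.exp ((k + 1 : ℕ) * t / n) * z := by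
      rw [hv, hzk, ← mul_assoc, ← Real.exp_add]
      congr 2
      push_cast
      ring
    have hmem : (|h (v * zk) - h zk| /
        ((1 + (Real.log zk) ^ 2) * (1 + (Real.log v) ^ 2))) ∈
        {y : ℝ | ∃ u z : ℝ, 0 < u ∧ 0 < z ∧ |Real.log u| ≤ ρ ∧
          y = |h (u * z) - h z| / ((1 + (Real.log z) ^ 2) * (1 + (Real.log u) ^ 2))} :=
      ⟨v, zk, hv0, hzk0, by rw [hlogv]; exact htn, rfl⟩
    have hle : |h (v * zk) - h zk| /
        ((1 + (Real.log zk) ^ 2) * (1 + (Real.log v) ^ 2)) ≤ Upsilon h ρ := by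
      rw [Upsilon]; exact le_csSup hbdd hmem
    rw [div_le_iff₀ (by positivity)] at hle
    have heq : |f (k + 1) - f k| = |h (v * zk) - h zk| := by
      simp only [hf]
      rw [hvzk, hzk]
    rw [heq]
    refine hle.trans ?_
    apply mul_le_mul_of_nonneg_left _ hU0
    rw [hlogv, hlogzk]
    have h1 : 1 + (↑k * t / ↑n + a) ^ 2 ≤ 2 * (1 + a ^ 2) * (1 + (↑k * t / ↑n) ^ 2) := by
      have := one_add_sq_add_le a (↑k * t / ↑n)
      nlinarith
    have hkn : (k:ℝ) / n ≤ 1 := by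
      rw [div_le_one hnR]
      exact_mod_cast hk.le
    have hkn0 : (0:ℝ) ≤ (k:ℝ) / n := by positivity
    have h2 : (↑k * t / ↑n) ^ 2 ≤ t ^ 2 := by
      have he : (↑k * t / ↑n) = ((k:ℝ) / n) * t := by ring
      have hkn2 : ((k:ℝ) / n) ^ 2 ≤ 1 := by nlinarith
      have := mul_le_mul_of_nonneg_right hkn2 (sq_nonneg t)
      rw [he, mul_pow]
      linarith
    have h3 : (t / n) ^ 2 ≤ ρ ^ 2 := by
      have h4 := abs_le.mp htn
      exact sq_le_sq' h4.1 h4.2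
    calc (1 + (↑k * t / ↑n + a) ^ 2) * (1 + (t / ↑n) ^ 2)
        ≤ (2 * (1 + a ^ 2) * (1 + (↑k * t / ↑n) ^ 2)) * (1 + (t / ↑n) ^ 2) :=
          mul_le_mul_of_nonneg_right h1 (by positivity)
      _ ≤ (2 * (1 + a ^ 2) * (1 + t ^ 2)) * (1 + ρ ^ 2) := by
          refine mul_le_mul ?_ (by linarith) (by positivity) (by positivity)
          have : (0:ℝ) ≤ 2 * (1 + a ^ 2) := by positivity
          nlinarith
      _ = 2 * (1 + a ^ 2) * (1 + t ^ 2) * (1 + ρ ^ 2) := by ring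
  -- sum up
  have tele : h (u * z) - h z = ∑ k ∈ Finset.range n, (f (k + 1) - f k) := by
    rw [Finset.sum_range_sub f n, hfn, hf0]
  have habs : |h (u * z) - h z| ≤
      n * (Upsilon h ρ * (2 * (1 + a ^ 2) * (1 + t ^ 2) * (1 + ρ ^ 2))) := by
    rw [tele]
    calc |∑ k ∈ Finset.range n, (f (k + 1) - f k)|
        ≤ ∑ k ∈ Finset.range n, |f (k + 1) - f k| := Finset.abs_sum_le_sum_abs _ _
      _ ≤ ∑ _k ∈ Finset.range n, Upsilon h ρ * (2 * (1 + a ^ 2) * (1 + t ^ 2) * (1 + ρ ^ 2)) :=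
          Finset.sum_le_sum step
      _ = n * (Upsilon h ρ * (2 * (1 + a ^ 2) * (1 + t ^ 2) * (1 + ρ ^ 2))) := by
          rw [Finset.sum_const, Finset.card_range, nsmul_eq_mul]
  refine habs.trans ?_
  have hnlam : (n:ℝ) ≤ 1 + lam := by
    have := Nat.ceil_lt_add_one hlam.le
    push_cast at this ⊢
    linarith [this]
  have hE0 : (0:ℝ) ≤ Upsilon h ρ * (2 * (1 + a ^ 2) * (1 + t ^ 2) * (1 + ρ ^ 2)) := by
    apply mul_nonneg hU0; positivity
  have h13 : (1 + lam) ≤ (1 + lam) ^ 3 := by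
    nlinarith [sq_nonneg lam, mul_pos hlam hlam, mul_pos (mul_pos hlam hlam) hlam]
  calc (n:ℝ) * (Upsilon h ρ * (2 * (1 + a ^ 2) * (1 + t ^ 2) * (1 + ρ ^ 2)))
      ≤ (1 + lam) * (Upsilon h ρ * (2 * (1 + a ^ 2) * (1 + t ^ 2) * (1 + ρ ^ 2))) :=
        mul_le_mul_of_nonneg_right hnlam hE0
    _ ≤ (1 + lam) ^ 3 * (Upsilon h ρ * (2 * (1 + a ^ 2) * (1 + t ^ 2) * (1 + ρ ^ 2))) :=
        mul_le_mul_of_nonneg_right h13 hE0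
    _ = 2 * (1 + lam) ^ 3 * (1 + ρ ^ 2) * Upsilon h ρ * ((1 + a ^ 2) * (1 + t ^ 2)) := by
        ring

theorem Upsilon_scale (h : ℝ → ℝ) (hmem : MemVw h) :
    ∀ ρ : ℝ, 0 < ρ → ∀ lam : ℝ, 0 < lam →
      Upsilon h (lam * ρ) ≤ 2 * (1 + lam) ^ 3 * (1 + ρ ^ 2) * Upsilon h ρ := by
  intro ρ hρ lam hlam
  obtain ⟨K, hK⟩ := hmem.2
  have hbdd := bddAbove_upsSet h K hK ρ
  have hU0 : 0 ≤ Upsilon h ρ := by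
    rw [Upsilon]; exact le_csSup hbdd (zero_mem_upsSet h ρ hρ.le)
  rw [Upsilon]
  refine Real.sSup_le ?_ (by positivity)
  rintro y ⟨u, z, hu, hz, hub, rfl⟩
  rw [div_le_iff₀ (by positivity)]
  exact key h K hK ρ hρ lam hlam u z hu hz hub
end

section
/- For every h ∈ V^w(ℝ₊), every ρ > 0, and all s, z > 0, one has |h(s) - h(z)| ≤ 16 (1 + ρ²)² (1 + (log z)²) (1 + |log s - log z|⁵/ρ⁵) Υ(h, ρ). -/
open Real

lemma add_one_mul_one_add_sq_le {x : ℝ} (hx : 0 ≤ x) (ρ : ℝ) :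
    (x + 1) * (1 + (x * ρ) ^ 2) ≤ 8 * (1 + ρ ^ 2) * (1 + x ^ 5) := by
  have hx3 : (x + 1) * (1 + x ^ 2) ≤ 8 * (1 + x ^ 5) := by
    nlinarith [pow_nonneg hx 3, pow_nonneg hx 4, mul_nonneg hx (sq_nonneg (x - 1)),
      mul_nonneg (pow_nonneg hx 3) (sq_nonneg (x - 1))]
  calc (x + 1) * (1 + (x * ρ) ^ 2) ≤ (x + 1) * ((1 + ρ ^ 2) * (1 + x ^ 2)) := by
        gcongr
        nlinarith [sq_nonneg x, sq_nonneg ρ]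
    _ = (1 + ρ ^ 2) * ((x + 1) * (1 + x ^ 2)) := by ring
    _ ≤ (1 + ρ ^ 2) * (8 * (1 + x ^ 5)) := by gcongr
    _ = 8 * (1 + ρ ^ 2) * (1 + x ^ 5) := by ring

section WeightedBounded

variable {h : ℝ → ℝ} {K : ℝ} (hK : ∀ z : ℝ, 0 < z → |h z| / (1 + log z ^ 2) ≤ K)
include hK

lemma bddAbove_upsilon_quotients (ρ : ℝ) :
    BddAbove {y : ℝ | ∃ u z : ℝ, 0 < u ∧ 0 < z ∧ |log u| ≤ ρ ∧
      y = |h (u * z) - h z| / ((1 + log z ^ 2) * (1 + log u ^ 2))} := by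
  have hK' : ∀ z : ℝ, 0 < z → |h z| ≤ K * (1 + log z ^ 2) := fun z hz =>
    (div_le_iff₀ (by positivity)).mp (hK z hz)
  have hK0 : 0 ≤ K := (div_nonneg (abs_nonneg _) (by positivity)).trans (hK 1 one_pos)
  refine ⟨3 * K, ?_⟩
  rintro _ ⟨u, z, hu, hz, -, rfl⟩
  rw [div_le_iff₀ (by positivity)]
  have huz := hK' (u * z) (mul_pos hu hz)
  rw [log_mul hu.ne' hz.ne'] at huz
  have hsplit := one_add_sq_add_le (log u) (log z)
  calc |h (u * z) - h z| ≤ |h (u * z)| + |h z| := abs_sub _ _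
    _ ≤ K * (2 * (1 + log u ^ 2) * (1 + log z ^ 2)) + K * (1 + log z ^ 2) := by
        gcongr
        · exact huz.trans (by gcongr)
        · exact hK' z hz
    _ ≤ 3 * K * ((1 + log z ^ 2) * (1 + log u ^ 2)) := by
        nlinarith [mul_nonneg hK0 (mul_nonneg (sq_nonneg (log u)) (sq_nonneg (log z))),
          mul_nonneg hK0 (sq_nonneg (log u))]

lemma abs_sub_le_mul_Upsilon {ρ u z : ℝ} (hu : 0 < u) (hz : 0 < z) (hlu : |log u| ≤ ρ) :
    |h (u * z) - h z| ≤ (1 + log z ^ 2) * (1 + log u ^ 2) * Upsilon h ρ := by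
  have hle := le_csSup (bddAbove_upsilon_quotients hK ρ) ⟨u, z, hu, hz, hlu, rfl⟩
  rw [div_le_iff₀ (by positivity)] at hle
  exact hle.trans_eq (mul_comm _ _)

lemma Upsilon_nonneg {ρ : ℝ} (hρ : 0 ≤ ρ) : 0 ≤ Upsilon h ρ := by
  have h1 := abs_sub_le_mul_Upsilon hK one_pos one_pos (by simpa using hρ)
  simpa using (abs_nonneg _).trans h1

lemma abs_sub_exp_add_le {ρ δ : ℝ} (x : ℝ) (hδ : |δ| ≤ ρ) :
    |h (exp (x + δ)) - h (exp x)| ≤ (1 + x ^ 2) * (1 + δ ^ 2) * Upsilon h ρ := by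
  simpa [exp_add, mul_comm (exp x)] using
    abs_sub_le_mul_Upsilon hK (exp_pos δ) (exp_pos x) (by rwa [log_exp])

lemma abs_sub_exp_add_le_nat_mul {ρ : ℝ} (hρ : 0 ≤ ρ) (L t : ℝ) {n : ℕ}
    (hn : |t| ≤ n * ρ) :
    |h (exp (L + t)) - h (exp L)| ≤
      n * (2 * (1 + L ^ 2) * (1 + t ^ 2) * (1 + ρ ^ 2) * Upsilon h ρ) := by
  set δ := t / n
  have hnδ : n * δ = t := by
    rcases Nat.eq_zero_or_pos n with rfl | hn0
    · simpa [eq_comm] using hn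
    · exact mul_div_cancel₀ t (by positivity)
  have hδ : |δ| ≤ ρ := by
    rw [abs_div, Nat.abs_cast]
    exact div_le_of_le_mul₀ n.cast_nonneg hρ (by linarith)
  have hstep : ∀ {k : ℕ}, k < n →
      dist (h (exp (L + k * δ))) (h (exp (L + (k + 1 : ℕ) * δ))) ≤
        2 * (1 + L ^ 2) * (1 + t ^ 2) * (1 + ρ ^ 2) * Upsilon h ρ := by
    intro k hk
    have hkδ : (k * δ) ^ 2 ≤ t ^ 2 := by
      rw [← hnδ, ← sq_abs, ← sq_abs (n * δ), abs_mul, abs_mul, Nat.abs_cast, Nat.abs_cast]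
      gcongr
    have hpos : 0 ≤ Upsilon h ρ := Upsilon_nonneg hK hρ
    rw [dist_comm, Real.dist_eq, Nat.cast_succ, add_one_mul, ← add_assoc]
    calc _ ≤ (1 + (L + k * δ) ^ 2) * (1 + δ ^ 2) * Upsilon h ρ :=
          abs_sub_exp_add_le hK _ hδ
      _ ≤ (2 * (1 + L ^ 2) * (1 + t ^ 2)) * (1 + ρ ^ 2) * Upsilon h ρ := by
        gcongr ?_ * (1 + ?_) * _
        · exact (one_add_sq_add_le L (k * δ)).trans (by gcongr)
        · exact sq_le_sq' (abs_le.mp hδ).1 (abs_le.mp hδ).2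
  have hchain := dist_le_range_sum_of_dist_le n hstep
  rw [Finset.sum_const, Finset.card_range, nsmul_eq_mul, dist_comm, Real.dist_eq, hnδ] at hchain
  simpa using hchain

end WeightedBounded

theorem Upsilon_pointwise_bound (h : ℝ → ℝ) (hmem : MemVw h) :
    ∀ ρ : ℝ, 0 < ρ → ∀ s z : ℝ, 0 < s → 0 < z →
      |h s - h z| ≤ 16 * (1 + ρ ^ 2) ^ 2 * (1 + (Real.log z) ^ 2) *
        (1 + |Real.log s - Real.log z| ^ 5 / ρ ^ 5) * Upsilon h ρ := by
  obtain ⟨-, K, hK⟩ := hmem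
  intro ρ hρ s z hs hz
  set t := log s - log z
  set x := |t| / ρ
  have hx : 0 ≤ x := by positivity
  have hxρ : x * ρ = |t| := div_mul_cancel₀ _ hρ.ne'
  have hceil : (⌈x⌉₊ : ℝ) ≤ x + 1 := (Nat.ceil_lt_add_one hx).le
  have hchain := abs_sub_exp_add_le_nat_mul hK hρ.le (log z) t (n := ⌈x⌉₊)
    (by rw [← hxρ]; gcongr; exact Nat.le_ceil x)
  rw [add_sub_cancel, exp_log hs, exp_log hz, ← sq_abs t, ← hxρ] at hchain
  have hpos : 0 ≤ Upsilon h ρ := Upsilon_nonneg hK hρ.le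
  calc |h s - h z|
      ≤ (x + 1) * (2 * (1 + log z ^ 2) * (1 + (x * ρ) ^ 2) * (1 + ρ ^ 2) * Upsilon h ρ) :=
        hchain.trans (by gcongr)
    _ = 2 * (1 + ρ ^ 2) * (1 + log z ^ 2) * Upsilon h ρ * ((x + 1) * (1 + (x * ρ) ^ 2)) := by
        ring
    _ ≤ 2 * (1 + ρ ^ 2) * (1 + log z ^ 2) * Upsilon h ρ * (8 * (1 + ρ ^ 2) * (1 + x ^ 5)) := by
        gcongr _ * ?_
        exact add_one_mul_one_add_sq_le hx ρ
    _ = _ := by rw [div_pow]; ring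
end

section
/- Let κ satisfy (κ₁) with finite moments m₀(κ), m₁(κ), m₂(κ) and (κ₂) with ζ > 0. Then for every h ∈ B^w(ℝ₊) (i.e., sup_{z>0} |h(z)|/(1+(log z)²) = ‖h‖_w < ∞) and every z > 0, |M_m^κ(h, z)| / (1 + (log z)²) ≤ (‖h‖_w / ζ) [ (1 + 1/m + 1/(3m²)) m₀(κ) + (1/m + 1/m²) m₁(κ) + (1/m²) m₂(κ) ]. Consequently M_m^κ maps B^w(ℝ₊) into B^w(ℝ₊), with operator norm at most (1/ζ)[(1 + 1/m + 1/(3m²)) m₀(κ) + (1/m + 1/m²) m₁(κ) + m₂(κ)/m²]. -/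
/-! For `z > 0` put `x = log z` and `s = z ^ m`, so `log s = m x`. Each numerator term is bounded
through the weighted size of `h`: `m ∫_{j/m}^{(j+1)/m} (1 + v²) dv = 1 + (j² + j + 1/3)/m²`, and
writing `j = (j - m x) + m x` turns `|κ(e^{-j} s)| (1 + (j² + j + 1/3)/m²)` into a combination of
the moments `m₀, m₁, m₂` times `1 + x²`. The denominator is at least `ζ`, because some
`e^{-j} s` lies in `[1, e]` (take `j = ⌊log s⌋`). -/

open Real MeasureTheory

/-- Max-product Kantorovich exponential sampling operator over all integers. -/
noncomputable def MopZ (κ : ℝ → ℝ) (m : ℝ) (h : ℝ → ℝ) (z : ℝ) : ℝ :=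
  sSup (Set.range fun j : ℤ => κ (Real.exp (-(j : ℝ)) * z ^ m) *
      (m * ∫ v in (j : ℝ)/m..((j : ℝ) + 1)/m, h (Real.exp v))) /
  sSup (Set.range fun j : ℤ => κ (Real.exp (-(j : ℝ)) * z ^ m))

noncomputable def momentBound (m M0 M1 M2 : ℝ) : ℝ :=
  (1 + 1/m + 1/(3 * m ^ 2)) * M0 + (1/m + 1/m ^ 2) * M1 + (1/m ^ 2) * M2

lemma nonneg_of_abs_le_mul_one_add_log_sq {h : ℝ → ℝ} {N : ℝ}
    (hN : ∀ z, 0 < z → |h z| ≤ N * (1 + log z ^ 2)) : 0 ≤ N := by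
  simpa using (abs_nonneg _).trans (hN 1 one_pos)

lemma abs_integral_comp_exp_le {h : ℝ → ℝ} {N : ℝ}
    (hN : ∀ z, 0 < z → |h z| ≤ N * (1 + log z ^ 2)) {a b : ℝ} (hab : a ≤ b) :
    |∫ v in a..b, h (exp v)| ≤ N * ∫ v in a..b, (1 + v ^ 2) := by
  have hN0 := nonneg_of_abs_le_mul_one_add_log_sq hN
  rw [← intervalIntegral.integral_const_mul]
  refine (intervalIntegral.abs_integral_le_integral_abs hab).trans ?_
  by_cases hi : IntervalIntegrable (fun v => |h (exp v)|) volume a b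
  · refine intervalIntegral.integral_mono_on hab hi
      ((by fun_prop : Continuous fun v : ℝ => N * (1 + v ^ 2)).intervalIntegrable a b) fun v _ => ?_
    simpa using hN (exp v) (exp_pos v)
  · rw [intervalIntegral.integral_undef hi]
    exact intervalIntegral.integral_nonneg hab fun v _ => mul_nonneg hN0 (by positivity)

lemma mul_integral_one_add_sq_div {m : ℝ} (hm : m ≠ 0) (a : ℝ) :
    m * ∫ v in a/m..(a + 1)/m, (1 + v ^ 2) = 1 + (a ^ 2 + a + 1/3) / m ^ 2 := by
  rw [intervalIntegral.integral_add intervalIntegrable_const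
    ((continuous_pow 2).intervalIntegrable _ _)]
  simp only [intervalIntegral.integral_const, integral_pow, smul_eq_mul, mul_one, div_pow]
  field_simp
  ring

lemma mul_one_add_sq_div_le_momentBound {a x j m M0 M1 M2 : ℝ} (hm : 0 < m) (ha : 0 ≤ a)
    (h0 : a ≤ M0) (h1 : a * |j - m * x| ≤ M1) (h2 : a * |j - m * x| ^ 2 ≤ M2) :
    a * (1 + (j ^ 2 + j + 1/3) / m ^ 2) ≤ (1 + x ^ 2) * momentBound m M0 M1 M2 := by
  set d := j - m * x
  have hj : j = d + m * x := by ring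
  have hx : |x| ≤ 1 + x ^ 2 := by nlinarith [sq_nonneg (|x| - 1), sq_abs x]
  have hx2 : 2 * |x| ≤ 1 + x ^ 2 := by nlinarith [sq_nonneg (|x| - 1), sq_abs x]
  have hM0 : 0 ≤ M0 := ha.trans h0
  have hM1 : 0 ≤ M1 := (mul_nonneg ha (abs_nonneg d)).trans h1
  have hM2 : 0 ≤ M2 := (mul_nonneg ha (sq_nonneg _)).trans h2
  have hx1 : 0 ≤ 1 + x ^ 2 := by positivity
  have hax : a * x ≤ M0 * (1 + x ^ 2) := calc
    a * x ≤ a * |x| := mul_le_mul_of_nonneg_left (le_abs_self x) ha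
    _ ≤ M0 * (1 + x ^ 2) := mul_le_mul h0 hx (abs_nonneg x) hM0
  have hadx : 2 * (a * d * x) ≤ M1 * (1 + x ^ 2) := calc
    2 * (a * d * x) ≤ 2 * (a * |d| * |x|) := by
      rw [mul_assoc a, mul_assoc a, ← abs_mul]; gcongr; exact le_abs_self _
    _ ≤ M1 * (2 * |x|) := by nlinarith [abs_nonneg x]
    _ ≤ M1 * (1 + x ^ 2) := mul_le_mul_of_nonneg_left hx2 hM1
  have had : a * d ≤ M1 * (1 + x ^ 2) := calc
    a * d ≤ a * |d| := mul_le_mul_of_nonneg_left (le_abs_self d) ha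
    _ ≤ M1 * (1 + x ^ 2) := h1.trans (le_mul_of_one_le_right hM1 (by nlinarith))
  have hadd : a * d ^ 2 ≤ M2 * (1 + x ^ 2) :=
    (sq_abs d ▸ h2).trans (le_mul_of_one_le_right hM2 (by nlinarith))
  have ha1 : a * (1 + x ^ 2) ≤ M0 * (1 + x ^ 2) := mul_le_mul_of_nonneg_right h0 hx1
  have cleared : a * (m ^ 2 + j ^ 2 + j + 1/3) ≤
      (1 + x ^ 2) * ((m ^ 2 + m + 1/3) * M0 + (m + 1) * M1 + M2) := by
    -- after `j = d + m x` the left side is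
    -- `m² a (1 + x²) + m (a x) + m (2 a d x) + a d + a d² + a / 3`
    rw [hj]
    nlinarith [mul_le_mul_of_nonneg_left hax hm.le, mul_le_mul_of_nonneg_left hadx hm.le,
      mul_le_mul_of_nonneg_left ha1 (sq_nonneg m), mul_nonneg hM0 hx1]
  calc a * (1 + (j ^ 2 + j + 1/3) / m ^ 2) = a * (m ^ 2 + j ^ 2 + j + 1/3) / m ^ 2 := by
        field_simp; ring
    _ ≤ (1 + x ^ 2) * ((m ^ 2 + m + 1/3) * M0 + (m + 1) * M1 + M2) / m ^ 2 := by gcongr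
    _ = (1 + x ^ 2) * momentBound m M0 M1 M2 := by
        unfold momentBound; field_simp

lemma abs_sSup_range_le {ι : Type*} [Nonempty ι] {g : ι → ℝ} {C : ℝ} (hg : ∀ i, |g i| ≤ C) :
    |sSup (Set.range g)| ≤ C := by
  have hbdd : BddAbove (Set.range g) :=
    ⟨C, by rintro _ ⟨i, rfl⟩; exact (le_abs_self _).trans (hg i)⟩
  obtain ⟨i⟩ := ‹Nonempty ι›
  refine abs_le.mpr ⟨(neg_le_of_abs_le (hg i)).trans (le_csSup hbdd ⟨i, rfl⟩), ?_⟩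
  exact csSup_le (Set.range_nonempty g) (by rintro _ ⟨i, rfl⟩; exact (le_abs_self _).trans (hg i))

lemma exists_int_exp_neg_mul_mem_Icc {s : ℝ} (hs : 0 < s) :
    ∃ j : ℤ, exp (-(j : ℝ)) * s ∈ Set.Icc 1 (exp 1) := by
  refine ⟨⌊log s⌋, ?_⟩
  rw [show exp (-(⌊log s⌋ : ℝ)) * s = exp (log s - ⌊log s⌋) by
    rw [exp_sub, exp_log hs, exp_neg]; ring]
  exact ⟨one_le_exp (by linarith [Int.floor_le (log s)]),
    exp_le_exp.mpr (by linarith [Int.lt_floor_add_one (log s)])⟩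

section Kernel

variable {κ : ℝ → ℝ} {M0 M1 M2 ζ : ℝ}

lemma le_sSup_range_kernel (hinf : ∀ u ∈ Set.Icc (1 : ℝ) (exp 1), ζ ≤ κ u)
    (hm0 : ∀ s : ℝ, 0 < s → ∀ j : ℤ, |κ (exp (-(j : ℝ)) * s)| ≤ M0) {s : ℝ} (hs : 0 < s) :
    ζ ≤ sSup (Set.range fun j : ℤ => κ (exp (-(j : ℝ)) * s)) := by
  obtain ⟨j, hj⟩ := exists_int_exp_neg_mul_mem_Icc hs
  have hbdd : BddAbove (Set.range fun j : ℤ => κ (exp (-(j : ℝ)) * s)) :=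
    ⟨M0, by rintro _ ⟨i, rfl⟩; exact (le_abs_self _).trans (hm0 s hs i)⟩
  exact (hinf _ hj).trans (le_csSup hbdd ⟨j, rfl⟩)

variable (hm0 : ∀ s : ℝ, 0 < s → ∀ j : ℤ, |κ (exp (-(j : ℝ)) * s)| ≤ M0)
    (hm1 : ∀ s : ℝ, 0 < s → ∀ j : ℤ, |κ (exp (-(j : ℝ)) * s)| * |(j : ℝ) - log s| ≤ M1)
    (hm2 : ∀ s : ℝ, 0 < s → ∀ j : ℤ, |κ (exp (-(j : ℝ)) * s)| * |(j : ℝ) - log s| ^ 2 ≤ M2)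
    {h : ℝ → ℝ} {N : ℝ} (hN : ∀ z, 0 < z → |h z| ≤ N * (1 + log z ^ 2))
    {m : ℝ} (hm : 0 < m)
include hm0 hm1 hm2 hN hm

lemma abs_kernel_mul_mean_le {z : ℝ} (hz : 0 < z) (j : ℤ) :
    |κ (exp (-(j : ℝ)) * z ^ m) * (m * ∫ v in (j : ℝ)/m..((j : ℝ) + 1)/m, h (exp v))|
      ≤ N * ((1 + log z ^ 2) * momentBound m M0 M1 M2) := by
  have hs : 0 < z ^ m := rpow_pos_of_pos hz m
  have hlog : log (z ^ m) = m * log z := log_rpow hz m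
  have hmean : |m * ∫ v in (j : ℝ)/m..((j : ℝ) + 1)/m, h (exp v)|
      ≤ N * (1 + ((j : ℝ) ^ 2 + j + 1/3) / m ^ 2) := by
    rw [abs_mul, abs_of_pos hm, ← mul_integral_one_add_sq_div hm.ne', mul_left_comm]
    exact mul_le_mul_of_nonneg_left
      (abs_integral_comp_exp_le hN (by gcongr; linarith)) hm.le
  have hmoments := mul_one_add_sq_div_le_momentBound hm (abs_nonneg _) (hm0 _ hs j)
    (hlog ▸ hm1 _ hs j) (hlog ▸ hm2 _ hs j)
  calc _ ≤ |κ (exp (-(j : ℝ)) * z ^ m)| * (N * (1 + ((j : ℝ) ^ 2 + j + 1/3) / m ^ 2)) := by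
        rw [abs_mul]; gcongr
    _ = N * (|κ (exp (-(j : ℝ)) * z ^ m)| * (1 + ((j : ℝ) ^ 2 + j + 1/3) / m ^ 2)) := by ring
    _ ≤ N * ((1 + log z ^ 2) * momentBound m M0 M1 M2) :=
        mul_le_mul_of_nonneg_left hmoments (nonneg_of_abs_le_mul_one_add_log_sq hN)

lemma abs_MopZ_le (hζ : 0 < ζ) (hinf : ∀ u ∈ Set.Icc (1 : ℝ) (exp 1), ζ ≤ κ u)
    {z : ℝ} (hz : 0 < z) :
    |MopZ κ m h z| ≤ N * ((1 + log z ^ 2) * momentBound m M0 M1 M2) / ζ := by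
  have hterm := abs_kernel_mul_mean_le hm0 hm1 hm2 hN hm hz
  have hD := le_sSup_range_kernel hinf hm0 (rpow_pos_of_pos hz m)
  rw [MopZ, abs_div, abs_of_pos (hζ.trans_le hD)]
  exact div_le_div₀ ((abs_nonneg _).trans (hterm 0)) (abs_sSup_range_le hterm) hζ hD

end Kernel

theorem MopZ_weighted_bound (κ : ℝ → ℝ) (M0 M1 M2 ζ : ℝ) (hζ : 0 < ζ)
    (hinf : ∀ u ∈ Set.Icc (1 : ℝ) (Real.exp 1), ζ ≤ κ u)
    (hm0 : ∀ s : ℝ, 0 < s → ∀ j : ℤ, |κ (Real.exp (-(j : ℝ)) * s)| ≤ M0)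
    (hm1 : ∀ s : ℝ, 0 < s → ∀ j : ℤ,
      |κ (Real.exp (-(j : ℝ)) * s)| * |(j : ℝ) - Real.log s| ≤ M1)
    (hm2 : ∀ s : ℝ, 0 < s → ∀ j : ℤ,
      |κ (Real.exp (-(j : ℝ)) * s)| * |(j : ℝ) - Real.log s| ^ 2 ≤ M2)
    (h : ℝ → ℝ) (N : ℝ) (hN : ∀ z : ℝ, 0 < z → |h z| / (1 + (Real.log z) ^ 2) ≤ N)
    (m : ℝ) (hm : 0 < m) :
    (∀ z : ℝ, 0 < z →
      |MopZ κ m h z| / (1 + (Real.log z) ^ 2) ≤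
        (N / ζ) * ((1 + 1/m + 1/(3 * m ^ 2)) * M0 + (1/m + 1/m ^ 2) * M1 + (1/m ^ 2) * M2)) ∧
    (∃ K : ℝ, ∀ z : ℝ, 0 < z → |MopZ κ m h z| / (1 + (Real.log z) ^ 2) ≤ K) := by
  have hN' : ∀ z, 0 < z → |h z| ≤ N * (1 + log z ^ 2) := fun z hz =>
    (div_le_iff₀ (by positivity)).mp (hN z hz)
  have bound : ∀ z : ℝ, 0 < z →
      |MopZ κ m h z| / (1 + log z ^ 2) ≤ N / ζ * momentBound m M0 M1 M2 := by
    intro z hz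
    rw [div_le_iff₀ (by positivity)]
    calc |MopZ κ m h z| ≤ N * ((1 + log z ^ 2) * momentBound m M0 M1 M2) / ζ :=
          abs_MopZ_le hm0 hm1 hm2 hN' hm hζ hinf hz
      _ = N / ζ * momentBound m M0 M1 M2 * (1 + log z ^ 2) := by ring
  exact ⟨bound, _, bound⟩
end

section
/- Under assumptions (κ₁) for order 2 and (κ₂) with ζ > 0, for every nonnegative h ∈ B^w(ℝ₊) and every z > 0 the quantity I₁ := (‖h‖_w/ζ) sup_{j∈ℤ} |κ(e^{-j} z^m)| m ∫_{j/m}^{(j+1)/m} |v² − (log z)²| dv satisfies I₁ ≤ (‖h‖_w/ζ)[ m₂(κ)/m² + (m₁(κ)/m)(1/m + 2|log z|) + (m₀(κ)/m)(1/(3m) + |log z|) ]. -/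
/-!
Each term of the supremum is bounded separately. On `[j/m, (j+1)/m]` one has
`|v² - L²| ≤ (v - L)² + 2|L||v - L|` and `|v - L| ≤ (v - j/m) + |j - mL|/m` with `L = log z`;
integrating these polynomials exactly and multiplying by `|κ(e^{-j} z^m)|` turns the powers of
`|j - log (z^m)| = |j - mL|` into the discrete moments `m₀, m₁, m₂` of the kernel.
-/

open Real MeasureTheory

open intervalIntegral

theorem abs_sq_sub_sq_le (v L : ℝ) : |v ^ 2 - L ^ 2| ≤ (v - L) ^ 2 + 2 * |L| * |v - L| :=
  calc |v ^ 2 - L ^ 2| = |(v - L) ^ 2 + 2 * L * (v - L)| := by ring_nf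
    _ ≤ |(v - L) ^ 2| + |2 * L * (v - L)| := abs_add_le _ _
    _ = (v - L) ^ 2 + 2 * |L| * |v - L| := by rw [abs_sq, abs_mul, abs_mul, abs_two]

theorem integral_sub_sq (a L δ : ℝ) :
    ∫ v in a..a + δ, (v - L) ^ 2 = (a - L) ^ 2 * δ + (a - L) * δ ^ 2 + δ ^ 3 / 3 := by
  rw [integral_comp_sub_right (· ^ 2), integral_pow]
  ring

theorem integral_abs_sub_le (a L : ℝ) {δ : ℝ} (hδ : 0 ≤ δ) :
    ∫ v in a..a + δ, |v - L| ≤ δ ^ 2 / 2 + |a - L| * δ :=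
  calc ∫ v in a..a + δ, |v - L| ≤ ∫ v in a..a + δ, (v - a + |a - L|) := by
        refine integral_mono_on (by linarith) (Continuous.intervalIntegrable (by fun_prop) _ _)
          (Continuous.intervalIntegrable (by fun_prop) _ _) fun v hv => ?_
        calc |v - L| ≤ |v - a| + |a - L| := abs_sub_le v a L
          _ = v - a + |a - L| := by rw [abs_of_nonneg (by linarith [hv.1])]
    _ = δ ^ 2 / 2 + |a - L| * δ := by
        rw [integral_comp_sub_right (· + |a - L|)]
        simp [integral_id, mul_comm]

theorem integral_abs_sq_sub_sq_le (a L : ℝ) {δ : ℝ} (hδ : 0 ≤ δ) :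
    ∫ v in a..a + δ, |v ^ 2 - L ^ 2| ≤
      (a - L) ^ 2 * δ + (a - L) * δ ^ 2 + δ ^ 3 / 3 + 2 * |L| * (δ ^ 2 / 2 + |a - L| * δ) :=
  calc ∫ v in a..a + δ, |v ^ 2 - L ^ 2|
      ≤ ∫ v in a..a + δ, ((v - L) ^ 2 + 2 * |L| * |v - L|) :=
        integral_mono_on (by linarith) (Continuous.intervalIntegrable (by fun_prop) _ _)
          (Continuous.intervalIntegrable (by fun_prop) _ _) fun v _ => abs_sq_sub_sq_le v L
    _ = (∫ v in a..a + δ, (v - L) ^ 2) + 2 * |L| * ∫ v in a..a + δ, |v - L| := by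
        rw [integral_add (Continuous.intervalIntegrable (by fun_prop) _ _)
          (Continuous.intervalIntegrable (by fun_prop) _ _), intervalIntegral.integral_const_mul]
    _ ≤ _ := by
        rw [integral_sub_sq]
        gcongr
        exact integral_abs_sub_le a L hδ

theorem mul_integral_abs_sq_sub_sq_le {K M0 M1 M2 m : ℝ} (L j : ℝ) (hm : 0 < m) (hK : 0 ≤ K)
    (h0 : K ≤ M0) (h1 : K * |j - m * L| ≤ M1) (h2 : K * |j - m * L| ^ 2 ≤ M2) :
    K * (m * ∫ v in j / m..(j + 1) / m, |v ^ 2 - L ^ 2|) ≤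
      M2 / m ^ 2 + (M1 / m) * (1 / m + 2 * |L|) + (M0 / m) * (1 / (3 * m) + |L|) := by
  set d := |j - m * L|
  set c := j / m - L with hc_def
  have hc : |c| = d / m := by
    rw [show c = (j - m * L) / m by rw [hc_def]; field_simp, abs_div, abs_of_pos hm]
  have hI := integral_abs_sq_sub_sq_le (j / m) L (δ := 1 / m) (by positivity)
  rw [← add_div] at hI
  have hmI : m * ∫ v in j / m..(j + 1) / m, |v ^ 2 - L ^ 2| ≤
      (d / m) ^ 2 + d / m / m + 1 / (3 * m ^ 2) + |L| / m + 2 * |L| * (d / m) :=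
    calc m * ∫ v in j / m..(j + 1) / m, |v ^ 2 - L ^ 2|
        ≤ m * (c ^ 2 * (1 / m) + c * (1 / m) ^ 2 + (1 / m) ^ 3 / 3 +
            2 * |L| * ((1 / m) ^ 2 / 2 + |c| * (1 / m))) := by gcongr
      _ = |c| ^ 2 + c / m + 1 / (3 * m ^ 2) + |L| / m + 2 * |L| * |c| := by
        rw [sq_abs]; field_simp; ring
      _ ≤ _ := by
        rw [hc]
        gcongr
        exact hc ▸ le_abs_self c
  calc K * (m * ∫ v in j / m..(j + 1) / m, |v ^ 2 - L ^ 2|)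
      ≤ K * ((d / m) ^ 2 + d / m / m + 1 / (3 * m ^ 2) + |L| / m + 2 * |L| * (d / m)) := by
        gcongr
    _ = K * d ^ 2 / m ^ 2 + K * d * (1 / m ^ 2 + 2 * |L| / m) +
          K * (1 / (3 * m ^ 2) + |L| / m) := by ring
    _ ≤ M2 / m ^ 2 + M1 * (1 / m ^ 2 + 2 * |L| / m) + M0 * (1 / (3 * m ^ 2) + |L| / m) := by
        gcongr
    _ = M2 / m ^ 2 + (M1 / m) * (1 / m + 2 * |L|) + (M0 / m) * (1 / (3 * m) + |L|) := by
        field_simp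

theorem I1_estimate_general (κ : ℝ → ℝ) (M0 M1 M2 ζ : ℝ) (hζ : 0 < ζ)
    (hm0 : ∀ s : ℝ, 0 < s → ∀ j : ℤ, |κ (Real.exp (-(j : ℝ)) * s)| ≤ M0)
    (hm1 : ∀ s : ℝ, 0 < s → ∀ j : ℤ,
      |κ (Real.exp (-(j : ℝ)) * s)| * |(j : ℝ) - Real.log s| ≤ M1)
    (hm2 : ∀ s : ℝ, 0 < s → ∀ j : ℤ,
      |κ (Real.exp (-(j : ℝ)) * s)| * |(j : ℝ) - Real.log s| ^ 2 ≤ M2)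
    (N : ℝ) (hN : 0 ≤ N) (m : ℝ) (hm : 0 < m) (z : ℝ) (hz : 0 < z) :
    (N / ζ) * sSup (Set.range fun j : ℤ => |κ (Real.exp (-(j : ℝ)) * z ^ m)| *
        (m * ∫ v in (j : ℝ)/m..((j : ℝ) + 1)/m, |v ^ 2 - (Real.log z) ^ 2|)) ≤
      (N / ζ) * (M2 / m ^ 2 + (M1 / m) * (1/m + 2 * |Real.log z|) +
        (M0 / m) * (1/(3 * m) + |Real.log z|)) := by
  have hs : 0 < z ^ m := rpow_pos_of_pos hz m
  have hlog : log (z ^ m) = m * log z := log_rpow hz m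
  refine mul_le_mul_of_nonneg_left (csSup_le (Set.range_nonempty _) ?_) (by positivity)
  rintro _ ⟨j, rfl⟩
  refine mul_integral_abs_sq_sub_sq_le (log z) j hm (abs_nonneg _) (hm0 _ hs j) ?_ ?_
  · simpa only [hlog] using hm1 _ hs j
  · simpa only [hlog] using hm2 _ hs j

theorem I1_estimate (κ : ℝ → ℝ) (M0 M1 M2 ζ : ℝ) (hζ : 0 < ζ)
    (hinf : ∀ u ∈ Set.Icc (1 : ℝ) (Real.exp 1), ζ ≤ κ u)
    (hm0 : ∀ s : ℝ, 0 < s → ∀ j : ℤ, |κ (Real.exp (-(j : ℝ)) * s)| ≤ M0)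
    (hm1 : ∀ s : ℝ, 0 < s → ∀ j : ℤ,
      |κ (Real.exp (-(j : ℝ)) * s)| * |(j : ℝ) - Real.log s| ≤ M1)
    (hm2 : ∀ s : ℝ, 0 < s → ∀ j : ℤ,
      |κ (Real.exp (-(j : ℝ)) * s)| * |(j : ℝ) - Real.log s| ^ 2 ≤ M2)
    (N : ℝ) (hN : 0 ≤ N) (m : ℝ) (hm : 0 < m) (z : ℝ) (hz : 0 < z) :
    (N / ζ) * sSup (Set.range fun j : ℤ => |κ (Real.exp (-(j : ℝ)) * z ^ m)| *
        (m * ∫ v in (j : ℝ)/m..((j : ℝ) + 1)/m, |v ^ 2 - (Real.log z) ^ 2|)) ≤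
      (N / ζ) * (M2 / m ^ 2 + (M1 / m) * (1/m + 2 * |Real.log z|) +
        (M0 / m) * (1/(3 * m) + |Real.log z|)) :=
  I1_estimate_general κ M0 M1 M2 ζ hζ hm0 hm1 hm2 N hN m hm z hz
end
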